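/- arXiv:2305.15412 — 5 statements merged into one kernel-verified Lean document; each statement's English description precedes it below -/
import Mathlib

section
/- Let y be an A-torsor with a lift {λ_g}_{g∈G} of a G-action on A, and let y_λ be the subsheaf of λ-fixed sections, which is a pseudo A^G-torsor. If y_λ is an A^G-torsor (i.e., it admits local sections), then the 2-cochain χ_λ is identically zero. Conversely, if χ_λ is identically zero and the first group cohomology classes locally vanish for the G-action on A, then y_λ is an A^G-torsor. -/
/-!
Framework: torsors under an abelian sheaf on a site, group actions on them,
and the associated obstruction 2-cochains, following Deopurkar, "Torsors and gerbes".
-/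

open CategoryTheory Limits Opposite

universe w v u

variable {C : Type u} [Category.{v} C]

/-- An `A`-torsor on the site `(C, J)`: a sheaf of sets `Y` with an action of the abelian
sheaf `A` which is simply transitive on sections wherever these are nonempty, and which
admits sections locally. -/
structure SheafTorsor (J : GrothendieckTopology C) (A : Cᵒᵖ ⥤ AddCommGrpCat.{v}) where
  /-- the underlying sheaf of sets -/
  Y : Cᵒᵖ ⥤ Type v
  isSheaf : Presheaf.IsSheaf J Y
  /-- the action of `A` -/
  smul : ∀ U : Cᵒᵖ, A.obj U → Y.obj U → Y.obj U
  zero_smul : ∀ (U : Cᵒᵖ) (x : Y.obj U), smul U 0 x = x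
  add_smul : ∀ (U : Cᵒᵖ) (a b : A.obj U) (x : Y.obj U),
    smul U (a + b) x = smul U a (smul U b x)
  map_smul : ∀ {U V : Cᵒᵖ} (f : U ⟶ V) (a : A.obj U) (x : Y.obj U),
    Y.map f (smul U a x) = smul V (A.map f a) (Y.map f x)
  /-- transitivity of the action on sections (vacuous when there are no sections) -/
  exists_smul_eq : ∀ (U : Cᵒᵖ) (x₁ x₂ : Y.obj U), ∃ a : A.obj U, smul U a x₁ = x₂
  /-- freeness of the action on sections -/
  smul_injective : ∀ (U : Cᵒᵖ) (a b : A.obj U) (x : Y.obj U),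
    smul U a x = smul U b x → a = b
  /-- every object admits a cover over which the torsor has sections -/
  locally_nonempty : ∀ U : C, ∃ S ∈ J U,
    ∀ ⦃V : C⦄ (f : V ⟶ U), S.arrows f → Nonempty (Y.obj (op V))

/-- A morphism of torsors which is equivariant with respect to a homomorphism
`f : A₁ ⟶ A₂` of abelian sheaves. -/
def IsEquivariantMap {J : GrothendieckTopology C} {A₁ A₂ : Cᵒᵖ ⥤ AddCommGrpCat.{v}}
    (f : A₁ ⟶ A₂) (y₁ : SheafTorsor J A₁) (y₂ : SheafTorsor J A₂) (l : y₁.Y ⟶ y₂.Y) : Prop :=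
  ∀ (U : Cᵒᵖ) (a : A₁.obj U) (x : y₁.Y.obj U),
    l.app U (y₁.smul U a x) = y₂.smul U (f.app U a) (l.app U x)

/-- A (left) action of a group `G` on the abelian sheaf `A` by sheaf automorphisms. -/
structure SheafGrpAction (G : Type w) [Group G] (A : Cᵒᵖ ⥤ AddCommGrpCat.{v}) where
  /-- the automorphism of `A` attached to `g : G` -/
  ρ : G → (A ⟶ A)
  ρ_one : ρ 1 = 𝟙 A
  ρ_mul : ∀ g h : G, ρ (g * h) = ρ h ≫ ρ g

/-- A lift of a `G`-action on `A` to an `A`-torsor `y`: a family of morphisms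
`λ_g : y ⟶ y`, where `λ_g` is equivariant with respect to the action of `g` on `A`. -/
def IsActionLift {J : GrothendieckTopology C} {A : Cᵒᵖ ⥤ AddCommGrpCat.{v}} {G : Type w} [Group G]
    (act : SheafGrpAction G A) (y : SheafTorsor J A) (lam : G → (y.Y ⟶ y.Y)) : Prop :=
  ∀ g : G, IsEquivariantMap (act.ρ g) y y (lam g)

variable [HasTerminal C]

/-- `χ : G → G → A(X)` is the obstruction 2-cochain of the lift `lam`, i.e. it satisfies
`λ_g ∘ λ_h = χ(g,h) · λ_{g·h}`, where a global section of `A` acts on `y` through its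
restrictions. -/
def IsObstructionCochain {J : GrothendieckTopology C} {A : Cᵒᵖ ⥤ AddCommGrpCat.{v}}
    {G : Type w} [Group G] (y : SheafTorsor J A) (lam : G → (y.Y ⟶ y.Y))
    (χ : G → G → A.obj (op (⊤_ C))) : Prop :=
  ∀ (g h : G) (U : Cᵒᵖ) (x : y.Y.obj U),
    (lam g).app U ((lam h).app U x) =
      y.smul U (A.map (terminal.from U.unop).op (χ g h)) ((lam (g * h)).app U x)

/-- `i : B ⟶ A` exhibits `B` as the sheaf of invariants `A^G` of the `G`-action on `A`. -/
def IsInvariantsSheaf {A : Cᵒᵖ ⥤ AddCommGrpCat.{v}} {G : Type w} [Group G]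
    (act : SheafGrpAction G A) (B : Cᵒᵖ ⥤ AddCommGrpCat.{v}) (i : B ⟶ A) : Prop :=
  (∀ U : Cᵒᵖ, Function.Injective (i.app U)) ∧
  (∀ (U : Cᵒᵖ) (a : A.obj U), (∀ g : G, (act.ρ g).app U a = a) ↔ ∃ b : B.obj U, i.app U b = a)

/-- The subsheaf `y_λ` of `λ`-fixed sections (a pseudo `A^G`-torsor) is a
genuine `A^G`-torsor (i.e. admits local sections) only if the 2-cochain `χ_λ` vanishes
identically; conversely, if `χ_λ` vanishes identically and the first group cohomology
classes locally vanish for the `G`-action on `A`, then `y_λ` admits local sections. -/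
theorem fixed_subsheaf_torsor_iff_cochain_zero
    (J : GrothendieckTopology C) (A : Cᵒᵖ ⥤ AddCommGrpCat.{v})
    (hA : Presheaf.IsSheaf J (A ⋙ forget AddCommGrpCat))
    (G : Type w) [Group G] [Finite G] (act : SheafGrpAction G A)
    (y : SheafTorsor J A) (lam : G → (y.Y ⟶ y.Y)) (hlam : IsActionLift act y lam)
    (χ : G → G → A.obj (op (⊤_ C))) (hχ : IsObstructionCochain y lam χ) :
    ((∀ U : C, ∃ S ∈ J U, ∀ ⦃V : C⦄ (f : V ⟶ U), S.arrows f →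
        ∃ x : y.Y.obj (op V), ∀ g : G, (lam g).app (op V) x = x) →
      ∀ g h : G, χ g h = 0) ∧
    ((∀ (U : C) (c : G → A.obj (op U)),
        (∀ g h : G, c (g * h) = c g + (act.ρ g).app (op U) (c h)) →
        ∃ S ∈ J U, ∀ ⦃V : C⦄ (f : V ⟶ U), S.arrows f →
          ∃ a : A.obj (op V), ∀ g : G,
            A.map f.op (c g) = (act.ρ g).app (op V) a - a) →
      (∀ g h : G, χ g h = 0) →
      ∀ U : C, ∃ S ∈ J U, ∀ ⦃V : C⦄ (f : V ⟶ U), S.arrows f →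
        ∃ x : y.Y.obj (op V), ∀ g : G, (lam g).app (op V) x = x) := by
  constructor
  · intro hsec g h
    obtain ⟨S, hS, hfix⟩ := hsec (⊤_ C)
    refine ((((CategoryTheory.isSheaf_iff_isSheaf_of_type J _).mp hA) S hS).isSeparatedFor).ext (fun V f hf => ?_)
    obtain ⟨x, hx⟩ := hfix f hf
    have := hχ g h (op V) x
    rw [hx h, hx g, hx (g * h)] at this
    have hzero : A.map (terminal.from V).op (χ g h) = 0 := by
      refine y.smul_injective (op V) _ _ x ?_
      rw [← this, y.zero_smul]
    have hft : f = terminal.from V := Subsingleton.elim _ _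
    show A.map f.op (χ g h) = A.map f.op 0
    rw [map_zero, hft]
    exact hzero
  · intro hH1 hzero U
    obtain ⟨S, hS, hne⟩ := y.locally_nonempty U
    -- choose sections
    have hx : ∀ ⦃V : C⦄ (f : V ⟶ U), S.arrows f → y.Y.obj (op V) :=
      fun V f hf => (hne f hf).some
    have hcex : ∀ ⦃V : C⦄ (f : V ⟶ U) (hf : S.arrows f) (g : G),
        ∃ a, y.smul (op V) a (hx f hf) = (lam g).app (op V) (hx f hf) :=
      fun V f hf g => y.exists_smul_eq _ _ _
    choose c hc using hcex
    -- cocycle property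
    have hcoc : ∀ ⦃V : C⦄ (f : V ⟶ U) (hf : S.arrows f) (g h : G),
        c f hf (g * h) = c f hf g + (act.ρ g).app (op V) (c f hf h) := by
      intro V f hf g h
      set x0 := hx f hf with hx0
      have e1 : (lam g).app (op V) ((lam h).app (op V) x0) =
          y.smul (op V) ((act.ρ g).app (op V) (c f hf h) + c f hf g) x0 := by
        rw [← hc f hf h, hlam g (op V) (c f hf h) x0, ← hc f hf g, ← y.add_smul]
      have e2 : (lam g).app (op V) ((lam h).app (op V) x0) =
          y.smul (op V) (c f hf (g * h)) x0 := by
        rw [hχ g h (op V) x0, hzero g h, map_zero, y.zero_smul, hc f hf (g * h)]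
      have := y.smul_injective (op V) _ _ x0 (e2.symm.trans e1)
      rw [this, add_comm]
    -- local splitting covers
    have hSex : ∀ ⦃V : C⦄ (f : V ⟶ U) (hf : S.arrows f),
        ∃ S' ∈ J V, ∀ ⦃W : C⦄ (k : W ⟶ V), S'.arrows k →
          ∃ a : A.obj (op W), ∀ g : G,
            A.map k.op (c f hf g) = (act.ρ g).app (op W) a - a :=
      fun V f hf => hH1 V (c f hf) (hcoc f hf)
    choose S' hS'mem hS'split using hSex
    refine ⟨Sieve.bind S.arrows (fun V f hf => S' f hf), J.bind_covering hS hS'mem, ?_⟩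
    rintro W g0 ⟨V, k, f, hf, hk, rfl⟩
    obtain ⟨a, ha⟩ := hS'split f hf k hk
    refine ⟨y.smul (op W) (-a) (y.Y.map k.op (hx f hf)), fun g => ?_⟩
    have hnat : (lam g).app (op W) (y.Y.map k.op (hx f hf)) =
        y.Y.map k.op ((lam g).app (op V) (hx f hf)) := by
      have := FunctorToTypes.naturality (lam g) k.op (hx f hf)
      simpa using this
    rw [hlam g (op W) (-a) _, hnat, ← hc f hf g, y.map_smul, ← y.add_smul, map_neg, ha g]
    congr 1
    abel
end

section
/- Let G act on the abelian sheaf A with invariants i : A^G → A, let ȳ be an A^G-torsor and y an A-torsor with an i-equivariant morphism f : ȳ → y. Then there exist unique sheaf morphisms {λ_g : y → y}_{g∈G}, each equivariant with respect to the action of g on A, satisfying λ_g ∘ f = f for all g ∈ G; these form a lift of the G-action to y, and the associated 2-cochain χ_λ is identically zero (in particular, the obstruction class in H^2(G, A(X)) vanishes). -/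
/-!
Framework: torsors under an abelian sheaf on a site, group actions on them,
and the associated obstruction 2-cochains, following Deopurkar, "Torsors and gerbes".
-/

open CategoryTheory Limits Opposite

universe w v u

variable {C : Type u} [Category.{v} C]

variable [HasTerminal C]

namespace TorsorProofAux

variable {J : GrothendieckTopology C} {A : Cᵒᵖ ⥤ AddCommGrpCat.{v}}

lemma smul_smul (y : SheafTorsor J A) (U : Cᵒᵖ) (a b : A.obj U) (x : y.Y.obj U) :
    y.smul U a (y.smul U b x) = y.smul U (a + b) x := (y.add_smul U a b x).symm

lemma eq_neg_smul (y : SheafTorsor J A) {U : Cᵒᵖ} {a : A.obj U} {x t : y.Y.obj U}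
    (h : y.smul U a x = t) : x = y.smul U (-a) t := by
  rw [← h, smul_smul, neg_add_cancel, y.zero_smul]

lemma nat_app {V W : Cᵒᵖ} (n : A ⟶ A) (φ : V ⟶ W) (a : A.obj V) :
    n.app W (A.map φ a) = A.map φ (n.app V a) := by
  exact ConcreteCategory.congr_hom (n.naturality φ) a

variable {G : Type w} [Group G] {B : Cᵒᵖ ⥤ AddCommGrpCat.{v}}

section

variable (act : SheafGrpAction G A) (ybar : SheafTorsor J B) (y : SheafTorsor J A)
  (f : ybar.Y ⟶ y.Y) {i : B ⟶ A}

/-- The characterizing relation for `λ_g`: `z = λ_g x` iff on every piece where `x` can be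
written as `a • f(s)`, `z` restricts to `(g • a) • f(s)`. -/
def Rel (g : G) (U : Cᵒᵖ) (x z : y.Y.obj U) : Prop :=
  ∀ (V : Cᵒᵖ) (φ : U ⟶ V) (s : ybar.Y.obj V) (a : A.obj V),
    y.Y.map φ x = y.smul V a (f.app V s) →
    y.Y.map φ z = y.smul V ((act.ρ g).app V a) (f.app V s)

variable {act ybar y f}

lemma f_nat {V W : Cᵒᵖ} (φ : V ⟶ W) (s : ybar.Y.obj V) :
    y.Y.map φ (f.app V s) = f.app W (ybar.Y.map φ s) := by
  have := ConcreteCategory.congr_hom (f.naturality φ) s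
  simpa using this.symm

/-- Well-definedness: the value `(g•a) • f(s)` does not depend on the chosen presentation
`a • f(s)` of a point. -/
lemma welldef (hi : IsInvariantsSheaf act B i) (hf : IsEquivariantMap i ybar y f)
    (g : G) {V : Cᵒᵖ} {s₁ s₂ : ybar.Y.obj V} {a₁ a₂ : A.obj V}
    (h : y.smul V a₁ (f.app V s₁) = y.smul V a₂ (f.app V s₂)) :
    y.smul V ((act.ρ g).app V a₁) (f.app V s₁)
      = y.smul V ((act.ρ g).app V a₂) (f.app V s₂) := by
  obtain ⟨b, hb⟩ := ybar.exists_smul_eq V s₁ s₂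
  have hfb : f.app V s₂ = y.smul V (i.app V b) (f.app V s₁) := by
    rw [← hb, hf]
  have ha : a₁ = a₂ + i.app V b := by
    apply y.smul_injective V _ _ (f.app V s₁)
    rw [h, hfb, smul_smul]
  have hinv : (act.ρ g).app V (i.app V b) = i.app V b :=
    ((hi.2 V (i.app V b)).mpr ⟨b, rfl⟩) g
  rw [hfb, smul_smul, ha, map_add, hinv]

/-- Restriction of a point of the form `(g•a) • f(s)`. -/
lemma restrict_eq {V W : Cᵒᵖ} (φ : V ⟶ W) {x' : y.Y.obj V} {s : ybar.Y.obj V}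
    {a : A.obj V} (h : x' = y.smul V a (f.app V s)) :
    y.Y.map φ x' = y.smul W (A.map φ a) (f.app W (ybar.Y.map φ s)) := by
  rw [h, y.map_smul, f_nat]

lemma restrict_pt (g : G) {V W : Cᵒᵖ} (φ : V ⟶ W) (s : ybar.Y.obj V) (a : A.obj V) :
    y.Y.map φ (y.smul V ((act.ρ g).app V a) (f.app V s))
      = y.smul W ((act.ρ g).app W (A.map φ a)) (f.app W (ybar.Y.map φ s)) := by
  rw [y.map_smul, f_nat, nat_app]

/-- Existence and uniqueness of the point `λ_g x` characterized by `Rel`. -/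
lemma existsUnique_rel (hi : IsInvariantsSheaf act B i) (hf : IsEquivariantMap i ybar y f)
    (g : G) (U : Cᵒᵖ) (x : y.Y.obj U) : ∃! z, Rel act ybar y f g U x z := by
  have hy : Presieve.IsSheaf J y.Y := (isSheaf_iff_isSheaf_of_type J y.Y).1 y.isSheaf
  obtain ⟨S, hS, hne⟩ := ybar.locally_nonempty U.unop
  -- the local family defining `λ_g x`
  have hsec : ∀ ⦃V : C⦄ (φ : V ⟶ U.unop), S.arrows φ →
      ∃ (s : ybar.Y.obj (op V)) (a : A.obj (op V)),
        y.Y.map φ.op x = y.smul (op V) a (f.app (op V) s) := by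
    intro V φ hφ
    obtain ⟨s⟩ := hne φ hφ
    obtain ⟨a, ha⟩ := y.exists_smul_eq (op V) (f.app (op V) s) (y.Y.map φ.op x)
    exact ⟨s, a, ha.symm⟩
  classical
  set p : Presieve.FamilyOfElements y.Y (S : Presieve U.unop) := fun V φ hφ =>
    y.smul (op V) ((act.ρ g).app (op V) (hsec φ hφ).choose_spec.choose)
      (f.app (op V) (hsec φ hφ).choose) with hp
  -- key: any two local presentations give the same value after applying `g`
  have key : ∀ {W : Cᵒᵖ} (s₁ s₂ : ybar.Y.obj W) (a₁ a₂ : A.obj W) (t : y.Y.obj W),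
      t = y.smul W a₁ (f.app W s₁) → t = y.smul W a₂ (f.app W s₂) →
      y.smul W ((act.ρ g).app W a₁) (f.app W s₁)
        = y.smul W ((act.ρ g).app W a₂) (f.app W s₂) := by
    intro W s₁ s₂ a₁ a₂ t h₁ h₂
    exact welldef hi hf g (h₁.symm.trans h₂)
  have pcompat : p.Compatible := by
    intro V₁ V₂ W g₁ g₂ f₁ f₂ h₁ h₂ hcomm
    rw [hp]
    dsimp only
    rw [restrict_pt, restrict_pt]
    apply key _ _ _ _ (y.Y.map (g₁ ≫ f₁).op x)
    · rw [op_comp, FunctorToTypes.map_comp_apply]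
      exact restrict_eq g₁.op (hsec f₁ h₁).choose_spec.choose_spec
    · rw [hcomm, op_comp, FunctorToTypes.map_comp_apply]
      exact restrict_eq g₂.op (hsec f₂ h₂).choose_spec.choose_spec
  obtain ⟨z, hz, -⟩ := hy S hS p pcompat
  -- `z` satisfies the relation
  have hrel : Rel act ybar y f g U x z := by
    intro V φ s a hxa
    have hS' : S.pullback φ.unop ∈ J V.unop := J.pullback_stable φ.unop hS
    refine ((hy _ hS').isSeparatedFor).ext ?_
    intro W ψ hψ
    have hψS : S.arrows (ψ ≫ φ.unop) := hψ
    have e1 : y.Y.map ψ.op (y.Y.map φ z) = p (ψ ≫ φ.unop) hψS := by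
      rw [← FunctorToTypes.map_comp_apply]
      exact hz (ψ ≫ φ.unop) hψS
    rw [e1, hp]
    dsimp only
    rw [restrict_pt]
    apply key _ _ _ _ (y.Y.map (ψ ≫ φ.unop).op x)
    · exact (hsec (ψ ≫ φ.unop) hψS).choose_spec.choose_spec
    · rw [op_comp, Quiver.Hom.op_unop, FunctorToTypes.map_comp_apply]
      exact restrict_eq ψ.op hxa
  refine ⟨z, hrel, ?_⟩
  -- uniqueness via separatedness on `S`
  intro z' hz'
  refine ((hy S hS).isSeparatedFor).ext ?_
  intro V φ hφ
  obtain ⟨s, a, ha⟩ := hsec φ hφ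
  rw [hz' (op V) φ.op s a ha, hrel (op V) φ.op s a ha]

end

end TorsorProofAux

/-- If an `A`-torsor `y` is induced from the invariants, i.e. there is an
`A^G`-torsor `ȳ` with an `i`-equivariant morphism `f : ȳ ⟶ y`, then there are unique
morphisms `λ_g : y ⟶ y`, each equivariant with respect to the action of `g` on `A`, with
`λ_g ∘ f = f`; they form a lift of the `G`-action whose obstruction 2-cochain vanishes
identically (so the obstruction class in `H²(G, A(X))` is zero). -/
theorem induced_from_invariants_obstruction_vanishes
    (J : GrothendieckTopology C) (A : Cᵒᵖ ⥤ AddCommGrpCat.{v})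
    (hA : Presheaf.IsSheaf J (A ⋙ forget AddCommGrpCat))
    (G : Type w) [Group G] [Finite G] (act : SheafGrpAction G A)
    (B : Cᵒᵖ ⥤ AddCommGrpCat.{v}) (hB : Presheaf.IsSheaf J (B ⋙ forget AddCommGrpCat))
    (i : B ⟶ A) (hi : IsInvariantsSheaf act B i)
    (ybar : SheafTorsor J B) (y : SheafTorsor J A)
    (f : ybar.Y ⟶ y.Y) (hf : IsEquivariantMap i ybar y f) :
    ∃ lam : G → (y.Y ⟶ y.Y),
      IsActionLift act y lam ∧
      (∀ g : G, f ≫ lam g = f) ∧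
      (∀ (g : G) (l : y.Y ⟶ y.Y),
        IsEquivariantMap (act.ρ g) y y l → f ≫ l = f → l = lam g) ∧
      (∀ g h : G, lam h ≫ lam g = lam (g * h)) ∧
      IsObstructionCochain y lam (fun _ _ => 0) := by
  classical
  open TorsorProofAux in
  -- the unique point satisfying the characterizing relation
  have EU : ∀ (g : G) (U : Cᵒᵖ) (x : y.Y.obj U), ∃! z, Rel act ybar y f g U x z :=
    fun g U x => existsUnique_rel hi hf g U x
  set lf : ∀ (g : G) (U : Cᵒᵖ), y.Y.obj U → y.Y.obj U :=
    fun g U x => (EU g U x).exists.choose with hlf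
  have hrel : ∀ g U x, Rel act ybar y f g U x (lf g U x) :=
    fun g U x => (EU g U x).exists.choose_spec
  have huniq : ∀ g U x z, Rel act ybar y f g U x z → z = lf g U x :=
    fun g U x z h => (EU g U x).unique h (hrel g U x)
  -- naturality
  have hnat : ∀ (g : G) {U V : Cᵒᵖ} (φ : U ⟶ V) (x : y.Y.obj U),
      y.Y.map φ (lf g U x) = lf g V (y.Y.map φ x) := by
    intro g U V φ x
    apply huniq
    intro W ψ s a h
    rw [← FunctorToTypes.map_comp_apply] at h ⊢
    exact hrel g U x W (φ ≫ ψ) s a h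
  set lam : G → (y.Y ⟶ y.Y) := fun g =>
    { app := fun U => TypeCat.ofHom (lf g U)
      naturality := fun U V φ => ConcreteCategory.hom_ext _ _ fun x => (hnat g φ x).symm } with hlam
  -- equivariance
  have hequiv : ∀ g : G, IsEquivariantMap (act.ρ g) y y (lam g) := by
    intro g U a x
    show lf g U (y.smul U a x) = y.smul U ((act.ρ g).app U a) (lf g U x)
    refine (huniq g U _ _ ?_).symm
    intro V φ s a' h
    have hx : y.Y.map φ x = y.smul V (a' - A.map φ a) (f.app V s) := by
      have h1 : y.smul V (A.map φ a) (y.Y.map φ x) = y.smul V a' (f.app V s) := by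
        rw [← y.map_smul]; exact h
      have h2 := TorsorProofAux.eq_neg_smul y h1
      rw [h2, TorsorProofAux.smul_smul, neg_add_eq_sub]
    have h3 := hrel g U x V φ s _ hx
    rw [y.map_smul, ← TorsorProofAux.nat_app, h3, TorsorProofAux.smul_smul, ← map_add,
      add_sub_cancel]
  -- f ≫ lam g = f
  have hfix : ∀ g : G, f ≫ lam g = f := by
    intro g
    ext U s₀
    show lf g U (f.app U s₀) = f.app U s₀
    refine (huniq g U _ _ ?_).symm
    intro V φ s a h
    obtain ⟨b, hb⟩ := ybar.exists_smul_eq V s (ybar.Y.map φ s₀)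
    have hfs : y.Y.map φ (f.app U s₀) = y.smul V (i.app V b) (f.app V s) := by
      rw [TorsorProofAux.f_nat, ← hb, hf]
    have hab : a = i.app V b := by
      apply y.smul_injective V _ _ (f.app V s)
      rw [← h, hfs]
    have hinvar : (act.ρ g).app V a = a := by
      rw [hab]; exact ((hi.2 V (i.app V b)).mpr ⟨b, rfl⟩) g
    rw [hinvar, ← h]
  -- uniqueness
  have huniq' : ∀ (g : G) (l : y.Y ⟶ y.Y),
      IsEquivariantMap (act.ρ g) y y l → f ≫ l = f → l = lam g := by
    intro g l hl hlf'
    ext U x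
    show l.app U x = lf g U x
    apply huniq
    intro V φ s a h
    have hn : y.Y.map φ (l.app U x) = l.app V (y.Y.map φ x) :=
      (ConcreteCategory.congr_hom (l.naturality φ) x).symm
    have hfs : l.app V (f.app V s) = f.app V s := ConcreteCategory.congr_hom (NatTrans.congr_app hlf' V) s
    rw [hn, h, hl, hfs]
  -- composition law
  have hcomp : ∀ g h : G, lam h ≫ lam g = lam (g * h) := by
    intro g h
    ext U x
    show lf g U (lf h U x) = lf (g * h) U x
    apply huniq
    intro V φ s a hx
    have h1 := hrel h U x V φ s a hx
    have h2 := hrel g U (lf h U x) V φ s _ h1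
    rw [h2]
    congr 1
    rw [act.ρ_mul]
    rfl
  refine ⟨lam, hequiv, hfix, huniq', hcomp, ?_⟩
  intro g h U x
  show lf g U (lf h U x) = y.smul U (A.map (terminal.from U.unop).op 0) (lf (g * h) U x)
  have : (A.map (terminal.from U.unop).op : A.obj (op (⊤_ C)) → A.obj U) 0 = 0 := map_zero _
  rw [this, y.zero_smul]
  have := ConcreteCategory.congr_hom (NatTrans.congr_app (hcomp g h) U) x
  exact this
end

section
/- Assume the first group cohomology classes locally vanish for the G-action on A. Let y be an A-torsor with a lift {λ_g}_{g∈G} of the G-action such that χ_λ is identically zero. Then: (1) there exists an A^G-torsor ȳ together with an i-equivariant morphism f : ȳ → y satisfying λ_g ∘ f = f for all g ∈ G (one may take ȳ = y_λ, the subsheaf of λ-fixed sections); (2) any A^G-torsor ȳ with such an i-equivariant morphism is unique up to A^G-equivariant isomorphism. In particular, y is induced from the invariants. -/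
/-!
Framework: torsors under an abelian sheaf on a site, group actions on them,
and the associated obstruction 2-cochains, following Deopurkar, "Torsors and gerbes".
-/

open CategoryTheory Limits Opposite

universe w v u

variable {C : Type u} [Category.{v} C]

variable [HasTerminal C]

namespace ObstructionVanishesAux

open CategoryTheory.GrothendieckTopology

variable {C : Type u} [Category.{v} C] {J : GrothendieckTopology C}
variable {A : Cᵒᵖ ⥤ AddCommGrpCat.{v}} {G : Type w} [Group G]

/-- The subpresheaf of `λ`-fixed sections of a torsor. -/
def fixedSub (y : SheafTorsor J A) (lam : G → (y.Y ⟶ y.Y)) : Subfunctor y.Y where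
  obj U := {x | ∀ g : G, (lam g).app U x = x}
  map {U V} f x hx := by
    intro g
    have h := types_congr_hom ((lam g).naturality f) x
    dsimp at h ⊢
    rw [h, hx g]

lemma fixedSub_isSheaf (y : SheafTorsor J A) (lam : G → (y.Y ⟶ y.Y)) :
    Presieve.IsSheaf J (fixedSub y lam).toFunctor := by
  have hY := (isSheaf_iff_isSheaf_of_type J y.Y).mp y.isSheaf
  refine ((fixedSub y lam).isSheaf_iff hY).mpr ?_
  intro U s hs g
  apply (hY _ hs).isSeparatedFor.ext
  intro V j hj
  have h := types_congr_hom ((lam g).naturality j.op) s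
  dsimp at h
  rw [← h, hj g]

section

variable (act : SheafGrpAction G A)
  (hH1 : ∀ (U : C) (c : G → A.obj (op U)),
      (∀ g h : G, c (g * h) = c g + (act.ρ g).app (op U) (c h)) →
      ∃ S ∈ J U, ∀ ⦃V : C⦄ (f : V ⟶ U), S.arrows f →
        ∃ a : A.obj (op V), ∀ g : G, A.map f.op (c g) = (act.ρ g).app (op V) a - a)
  (y : SheafTorsor J A) (lam : G → (y.Y ⟶ y.Y)) (hlam : IsActionLift act y lam)
  (hcomp : ∀ (g h : G) (U : Cᵒᵖ) (x : y.Y.obj U),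
      (lam g).app U ((lam h).app U x) = (lam (g * h)).app U x)
  {B : Cᵒᵖ ⥤ AddCommGrpCat.{v}} (i : B ⟶ A) (hi : IsInvariantsSheaf act B i)

/-- The fixed sections form a `B`-torsor, where `B` is the sheaf of invariants. -/
noncomputable def fixedTorsor : SheafTorsor J B where
  Y := (fixedSub y lam).toFunctor
  isSheaf := (isSheaf_iff_isSheaf_of_type J _).mpr (fixedSub_isSheaf y lam)
  smul U b x := ⟨y.smul U (i.app U b) x.1, by
    intro g
    rw [hlam g U _ x.1, x.2 g]
    congr 1
    exact ((hi.2 U (i.app U b)).mpr ⟨b, rfl⟩) g⟩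
  zero_smul U x := by
    apply Subtype.ext
    show y.smul U (i.app U 0) x.1 = x.1
    rw [map_zero, y.zero_smul]
  add_smul U a b x := by
    apply Subtype.ext
    show y.smul U (i.app U (a + b)) x.1 = _
    rw [map_add, y.add_smul]
  map_smul {U V} f b x := by
    apply Subtype.ext
    show y.Y.map f (y.smul U (i.app U b) x.1) = y.smul V (i.app V (B.map f b)) (y.Y.map f x.1)
    rw [y.map_smul, NatTrans.naturality_apply]
  exists_smul_eq U x₁ x₂ := by
    obtain ⟨a, ha⟩ := y.exists_smul_eq U x₁.1 x₂.1
    have hinv : ∀ g : G, (act.ρ g).app U a = a := by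
      intro g
      apply y.smul_injective U _ _ x₁.1
      calc y.smul U ((act.ρ g).app U a) x₁.1
          = y.smul U ((act.ρ g).app U a) ((lam g).app U x₁.1) := by rw [x₁.2 g]
        _ = (lam g).app U (y.smul U a x₁.1) := (hlam g U a x₁.1).symm
        _ = (lam g).app U x₂.1 := by rw [ha]
        _ = x₂.1 := x₂.2 g
        _ = y.smul U a x₁.1 := ha.symm
    obtain ⟨b, hb⟩ := (hi.2 U a).mp hinv
    exact ⟨b, Subtype.ext (by show y.smul U (i.app U b) x₁.1 = x₂.1; rw [hb, ha])⟩
  smul_injective U b b' x h := by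
    apply hi.1 U
    apply y.smul_injective U _ _ x.1
    exact congrArg Subtype.val h
  locally_nonempty U := by
    obtain ⟨S, hS, hsec⟩ := y.locally_nonempty U
    have key : ∀ ⦃V : C⦄ (f : V ⟶ U), S.arrows f → ∃ S' ∈ J V,
        ∀ ⦃W : C⦄ (k : W ⟶ V), S'.arrows k →
          Nonempty ((fixedSub y lam).toFunctor.obj (op W)) := by
      intro V f hf
      obtain ⟨x⟩ := hsec f hf
      choose c hc using fun g : G => y.exists_smul_eq (op V) x ((lam g).app (op V) x)
      have hcoc : ∀ g h : G, c (g * h) = c g + (act.ρ g).app (op V) (c h) := by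
        intro g h
        apply y.smul_injective (op V) _ _ x
        have e1 : (lam g).app (op V) ((lam h).app (op V) x)
            = y.smul (op V) ((act.ρ g).app (op V) (c h) + c g) x := by
          rw [← hc h, hlam g (op V) (c h) x, ← hc g, ← y.add_smul]
        rw [hc (g * h), ← hcomp g h (op V) x, e1]
        congr 1
        abel
      obtain ⟨S', hS', h'⟩ := hH1 V c hcoc
      refine ⟨S', hS', ?_⟩
      intro W k hk
      obtain ⟨a, ha⟩ := h' k hk
      refine ⟨⟨y.smul (op W) (-a) (y.Y.map k.op x), ?_⟩⟩
      intro g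
      have h1 : (lam g).app (op W) (y.Y.map k.op x)
          = y.smul (op W) (A.map k.op (c g)) (y.Y.map k.op x) := by
        have hnat := types_congr_hom ((lam g).naturality k.op) x
        dsimp at hnat
        rw [hnat, ← hc g, y.map_smul]
      rw [hlam g (op W) (-a) _, h1, ← y.add_smul, ha g]
      congr 1
      rw [map_neg]
      abel
    choose S' hS' hfix using key
    refine ⟨Sieve.bind S.arrows (fun V f hf => S' f hf),
      J.bind_covering hS (fun V f hf => hS' f hf), ?_⟩
    intro W f hf
    obtain ⟨Z, g, h, hh, hg, rfl⟩ := hf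
    exact hfix h hh g hg

end

section

variable (act : SheafGrpAction G A) (y : SheafTorsor J A) (lam : G → (y.Y ⟶ y.Y))
  (hlam : IsActionLift act y lam)
  {B : Cᵒᵖ ⥤ AddCommGrpCat.{v}} (i : B ⟶ A) (hi : IsInvariantsSheaf act B i)
  (ybar : SheafTorsor J B) (f : ybar.Y ⟶ y.Y)
  (hf : IsEquivariantMap i ybar y f) (hfl : ∀ g : G, f ≫ lam g = f)

include hf in
lemma f_app_injective (hiinj : ∀ U : Cᵒᵖ, Function.Injective (i.app U)) (U : Cᵒᵖ) :
    Function.Injective (f.app U) := by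
  intro x x' h
  obtain ⟨b, hb⟩ := ybar.exists_smul_eq U x x'
  have : y.smul U (i.app U b) (f.app U x) = y.smul U (i.app U 0) (f.app U x) := by
    rw [← hf U b x, hb, h, map_zero, y.zero_smul]
  have hb0 : b = 0 := hiinj U (y.smul_injective U _ _ _ this)
  rw [← hb, hb0, ybar.zero_smul]

/-- The canonical factorization of `f` through the fixed subpresheaf. -/
def toFixed : ybar.Y ⟶ (fixedSub y lam).toFunctor :=
  (fixedSub y lam).lift f (by rintro U _ ⟨x, rfl⟩ g; exact types_congr_hom (congr_app (hfl g) U) x)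

include hlam hf hfl hi in
lemma toFixed_isIso : IsIso (toFixed y lam ybar f hfl) := by
  rw [NatTrans.isIso_iff_isIso_app]
  intro U
  rw [isIso_iff_bijective]
  constructor
  · intro x x' h
    exact f_app_injective y i ybar f hf hi.1 U (congrArg Subtype.val h)
  · intro t
    obtain ⟨S, hS, hsec⟩ := ybar.locally_nonempty (unop U)
    have hpre : ∀ ⦃V : C⦄ (j : V ⟶ unop U), S.arrows j → ∃ x : ybar.Y.obj (op V),
        f.app (op V) x = y.Y.map j.op t.1 := by
      intro V j hj
      obtain ⟨x₀⟩ := hsec j hj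
      obtain ⟨a, ha⟩ := y.exists_smul_eq (op V) (f.app (op V) x₀) (y.Y.map j.op t.1)
      have hfix : ∀ g : G, (lam g).app (op V) (y.Y.map j.op t.1) = y.Y.map j.op t.1 :=
        (fixedSub y lam).map j.op t.2
      have hinv : ∀ g : G, (act.ρ g).app (op V) a = a := by
        intro g
        apply y.smul_injective (op V) _ _ (f.app (op V) x₀)
        have e1 : (lam g).app (op V) (f.app (op V) x₀) = f.app (op V) x₀ :=
          types_congr_hom (congr_app (hfl g) (op V)) x₀
        calc y.smul (op V) ((act.ρ g).app (op V) a) (f.app (op V) x₀)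
            = y.smul (op V) ((act.ρ g).app (op V) a)
                ((lam g).app (op V) (f.app (op V) x₀)) := by rw [e1]
          _ = (lam g).app (op V) (y.smul (op V) a (f.app (op V) x₀)) :=
              (hlam g (op V) a _).symm
          _ = (lam g).app (op V) (y.Y.map j.op t.1) := by rw [ha]
          _ = y.Y.map j.op t.1 := hfix g
          _ = y.smul (op V) a (f.app (op V) x₀) := ha.symm
      obtain ⟨b, hb⟩ := (hi.2 (op V) a).mp hinv
      exact ⟨ybar.smul (op V) b x₀, by rw [hf (op V) b x₀, hb, ha]⟩
    choose xv hxv using hpre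
    have hYbar := (isSheaf_iff_isSheaf_of_type J ybar.Y).mp ybar.isSheaf
    have hY := (isSheaf_iff_isSheaf_of_type J y.Y).mp y.isSheaf
    have hcompat : Presieve.FamilyOfElements.Compatible
        (fun V j hj => xv j hj : Presieve.FamilyOfElements ybar.Y S.arrows) := by
      intro V₁ V₂ Z g₁ g₂ j₁ j₂ h₁ h₂ comm
      apply f_app_injective y i ybar f hf hi.1 (op Z)
      have n1 := types_congr_hom (f.naturality g₁.op) (xv j₁ h₁)
      have n2 := types_congr_hom (f.naturality g₂.op) (xv j₂ h₂)
      dsimp at n1 n2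
      rw [n1, n2, hxv j₁ h₁, hxv j₂ h₂, ← FunctorToTypes.map_comp_apply,
        ← FunctorToTypes.map_comp_apply, ← op_comp, ← op_comp, comm]
    set t₀ := (hYbar S hS).amalgamate _ hcompat with ht₀
    have hglue := (hYbar S hS).isAmalgamation hcompat
    refine ⟨t₀, ?_⟩
    apply Subtype.ext
    show f.app U t₀ = t.1
    apply (hY S hS).isSeparatedFor.ext
    intro V j hj
    have n := types_congr_hom (f.naturality j.op) t₀
    dsimp at n
    rw [← n, hglue j hj, hxv j hj]
end

end ObstructionVanishesAux

/-- Assume the first group cohomology classes locally vanish for the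
`G`-action on `A`. If `y` is an `A`-torsor with a lift `{λ_g}` of the `G`-action whose
obstruction 2-cochain vanishes identically, then for any realization `i : A^G ⟶ A` of the
invariants there is an `A^G`-torsor `ȳ` with an `i`-equivariant morphism `f : ȳ ⟶ y`
satisfying `λ_g ∘ f = f` for all `g`, and such an `A^G`-torsor is unique up to
`A^G`-equivariant isomorphism.  In particular `y` is induced from the invariants. -/
theorem obstruction_vanishes_induced_from_invariants
    (J : GrothendieckTopology C) (A : Cᵒᵖ ⥤ AddCommGrpCat.{v})
    (hA : Presheaf.IsSheaf J (A ⋙ forget AddCommGrpCat))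
    (G : Type w) [Group G] [Finite G] (act : SheafGrpAction G A)
    (hH1 : ∀ (U : C) (c : G → A.obj (op U)),
      (∀ g h : G, c (g * h) = c g + (act.ρ g).app (op U) (c h)) →
      ∃ S ∈ J U, ∀ ⦃V : C⦄ (f : V ⟶ U), S.arrows f →
        ∃ a : A.obj (op V), ∀ g : G, A.map f.op (c g) = (act.ρ g).app (op V) a - a)
    (y : SheafTorsor J A) (lam : G → (y.Y ⟶ y.Y)) (hlam : IsActionLift act y lam)
    (χ : G → G → A.obj (op (⊤_ C))) (hχ : IsObstructionCochain y lam χ)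
    (hχzero : ∀ g h : G, χ g h = 0)
    (B : Cᵒᵖ ⥤ AddCommGrpCat.{v}) (hB : Presheaf.IsSheaf J (B ⋙ forget AddCommGrpCat))
    (i : B ⟶ A) (hi : IsInvariantsSheaf act B i) :
    (∃ (ybar : SheafTorsor J B) (f : ybar.Y ⟶ y.Y),
      IsEquivariantMap i ybar y f ∧ ∀ g : G, f ≫ lam g = f) ∧
    (∀ (ybar₁ ybar₂ : SheafTorsor J B) (f₁ : ybar₁.Y ⟶ y.Y) (f₂ : ybar₂.Y ⟶ y.Y),
      IsEquivariantMap i ybar₁ y f₁ → (∀ g : G, f₁ ≫ lam g = f₁) →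
      IsEquivariantMap i ybar₂ y f₂ → (∀ g : G, f₂ ≫ lam g = f₂) →
      ∃ e : ybar₁.Y ≅ ybar₂.Y, IsEquivariantMap (𝟙 B) ybar₁ ybar₂ e.hom) := by
  classical
  have hcomp : ∀ (g h : G) (U : Cᵒᵖ) (x : y.Y.obj U),
      (lam g).app U ((lam h).app U x) = (lam (g * h)).app U x := by
    intro g h U x
    rw [hχ g h U x, hχzero g h, map_zero, y.zero_smul]
  constructor
  · refine ⟨ObstructionVanishesAux.fixedTorsor act hH1 y lam hlam hcomp i hi,
      (ObstructionVanishesAux.fixedSub y lam).ι, fun U b x => rfl, fun g => ?_⟩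
    ext U x
    exact x.2 g
  · intro ybar₁ ybar₂ f₁ f₂ he₁ hl₁ he₂ hl₂
    have h₁ := ObstructionVanishesAux.toFixed_isIso act y lam hlam i hi ybar₁ f₁ he₁ hl₁
    have h₂ := ObstructionVanishesAux.toFixed_isIso act y lam hlam i hi ybar₂ f₂ he₂ hl₂
    set m₁ := ObstructionVanishesAux.toFixed y lam ybar₁ f₁ hl₁ with hm₁
    set m₂ := ObstructionVanishesAux.toFixed y lam ybar₂ f₂ hl₂ with hm₂
    letI : IsIso m₁ := h₁
    letI : IsIso m₂ := h₂
    have e1 : m₁ ≫ (ObstructionVanishesAux.fixedSub y lam).ι = f₁ :=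
      CategoryTheory.Subfunctor.lift_ι _ _
    have e2 : m₂ ≫ (ObstructionVanishesAux.fixedSub y lam).ι = f₂ :=
      CategoryTheory.Subfunctor.lift_ι _ _
    refine ⟨asIso m₁ ≪≫ (asIso m₂).symm, ?_⟩
    have comp_eq : (asIso m₁ ≪≫ (asIso m₂).symm).hom ≫ f₂ = f₁ := by
      rw [← e2, ← e1]
      simp
    have key : ∀ (U : Cᵒᵖ) (z : ybar₁.Y.obj U),
        f₂.app U ((asIso m₁ ≪≫ (asIso m₂).symm).hom.app U z) = f₁.app U z := by
      intro U z
      exact types_congr_hom (congr_app comp_eq U) z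
    intro U b x
    apply ObstructionVanishesAux.f_app_injective y i ybar₂ f₂ he₂ hi.1 U
    rw [key, he₁, he₂, key]
    simp
end

section
/- Let y be an A-torsor with a lift of a G-action, and let N be the normal subgroup of G consisting of elements whose underlying action on A is trivial. Then there is an induced action of G/N on y such that the obstruction class of the G-action in H^2(G, A(X)) is the image of the obstruction class of the G/N-action under the inflation map H^2(G/N, A(X)) → H^2(G, A(X)). -/
/-!
Framework: torsors under an abelian sheaf on a site, group actions on them,
and the associated obstruction 2-cochains, following Deopurkar, "Torsors and gerbes".
-/

open CategoryTheory Limits Opposite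

universe w v u

variable {C : Type u} [Category.{v} C]

variable [HasTerminal C]

section AuxLemmas

variable {J : GrothendieckTopology C} {A : Cᵒᵖ ⥤ AddCommGrpCat.{v}}

lemma SheafTorsor.smul_comm (y : SheafTorsor J A) (U : Cᵒᵖ) (a b : A.obj U) (x : y.Y.obj U) :
    y.smul U a (y.smul U b x) = y.smul U b (y.smul U a x) := by
  rw [← y.add_smul, ← y.add_smul, add_comm]

/-- If two equivariant maps (for the same `ρ`) differ by a scalar at one point of `y(U)`,
they differ by the same scalar at every point of `y(U)`. -/
lemma pointwise_scalar (y : SheafTorsor J A) (ρ : A ⟶ A) (l₁ l₂ : y.Y ⟶ y.Y)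
    (h₁ : IsEquivariantMap ρ y y l₁) (h₂ : IsEquivariantMap ρ y y l₂)
    (U : Cᵒᵖ) (a : A.obj U) (x₀ : y.Y.obj U)
    (hx₀ : l₁.app U x₀ = y.smul U a (l₂.app U x₀)) (x : y.Y.obj U) :
    l₁.app U x = y.smul U a (l₂.app U x) := by
  obtain ⟨b, hb⟩ := y.exists_smul_eq U x₀ x
  rw [← hb, h₁, h₂, hx₀, y.smul_comm]

/-- Two equivariant lifts of the same sheaf endomorphism of `A` to an `A`-torsor differ
globally by a global section of `A`. -/
lemma exists_global_scalar [HasTerminal C] (y : SheafTorsor J A)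
    (hA : Presheaf.IsSheaf J (A ⋙ forget AddCommGrpCat))
    (ρ : A ⟶ A) (l₁ l₂ : y.Y ⟶ y.Y)
    (h₁ : IsEquivariantMap ρ y y l₁) (h₂ : IsEquivariantMap ρ y y l₂) :
    ∃ t : A.obj (op (⊤_ C)), ∀ (U : Cᵒᵖ) (x : y.Y.obj U),
      l₁.app U x = y.smul U (A.map (terminal.from U.unop).op t) (l₂.app U x) := by
  classical
  have hA' := (isSheaf_iff_isSheaf_of_type J _).1 hA
  obtain ⟨S, hS, hne⟩ := y.locally_nonempty (⊤_ C)
  -- existence of a scalar over each `U` with `y(U)` inhabited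
  have hgen : ∀ (U : Cᵒᵖ) (x : y.Y.obj U), ∃ a : A.obj U,
      ∀ x' : y.Y.obj U, l₁.app U x' = y.smul U a (l₂.app U x') := by
    intro U x
    obtain ⟨a, ha⟩ := y.exists_smul_eq U (l₂.app U x) (l₁.app U x)
    exact ⟨a, fun x' => pointwise_scalar y ρ l₁ l₂ h₁ h₂ U a x ha.symm x'⟩
  choose gen hgenspec using hgen
  -- uniqueness of the scalar
  have huniq : ∀ (U : Cᵒᵖ) (x x' : y.Y.obj U) (a b : A.obj U),
      l₁.app U x = y.smul U a (l₂.app U x) →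
      l₁.app U x' = y.smul U b (l₂.app U x') → a = b := by
    intro U x x' a b ha hb
    have ha' := pointwise_scalar y ρ l₁ l₂ h₁ h₂ U a x ha x'
    exact y.smul_injective U a b _ (ha'.symm.trans hb)
  -- restriction of a valid scalar is a valid scalar
  have hres : ∀ (U V : Cᵒᵖ) (f : U ⟶ V) (x : y.Y.obj U) (a : A.obj U),
      l₁.app U x = y.smul U a (l₂.app U x) →
      l₁.app V (y.Y.map f x) = y.smul V (A.map f a) (l₂.app V (y.Y.map f x)) := by
    intro U V f x a ha
    rw [FunctorToTypes.naturality l₁ f x, ha, y.map_smul,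
      ← FunctorToTypes.naturality l₂ f x]
  -- glue the local scalars into a global section
  set fam : Presieve.FamilyOfElements (A ⋙ forget AddCommGrpCat) S.arrows :=
    fun V f hf => gen (op V) (hne f hf).some with hfam
  have hcompat : fam.Compatible := by
    intro Y₁ Y₂ Z g₁ g₂ f₁ f₂ hf₁ hf₂ _
    exact huniq (op Z) (y.Y.map g₁.op (hne f₁ hf₁).some) (y.Y.map g₂.op (hne f₂ hf₂).some)
      _ _ (hres _ _ g₁.op _ _ (hgenspec _ _ _)) (hres _ _ g₂.op _ _ (hgenspec _ _ _))
  obtain ⟨t, htam, -⟩ := hA' S hS fam hcompat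
  refine ⟨t, fun U x => ?_⟩
  have hgoal : A.map (terminal.from U.unop).op t = gen U x := by
    have hpb : S.pullback (terminal.from U.unop) ∈ J U.unop := J.pullback_stable _ hS
    refine ((hA' _ hpb).isSeparatedFor).ext (fun W f hf => ?_)
    have hfS : S.arrows (f ≫ terminal.from U.unop) := hf
    have h1 : A.map f.op (A.map (terminal.from U.unop).op t)
        = gen (op W) (hne _ hfS).some := by
      have h0 := htam (f ≫ terminal.from U.unop) hfS
      calc A.map f.op (A.map (terminal.from U.unop).op t)
          = A.map ((terminal.from U.unop).op ≫ f.op) t := by rw [A.map_comp]; rfl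
        _ = (A ⋙ forget AddCommGrpCat).map (f ≫ terminal.from U.unop).op t := by
            rw [op_comp]; rfl
        _ = gen (op W) (hne _ hfS).some := h0
    have h2 : A.map f.op (gen U x) = gen (op W) (hne _ hfS).some :=
      huniq (op W) (y.Y.map f.op x) (hne _ hfS).some _ _
        (hres U (op W) f.op x _ (hgenspec U x x)) (hgenspec _ _ _)
    exact h1.trans h2.symm
  rw [hgoal]
  exact hgenspec U x x

end AuxLemmas

/-- Let `y` be an `A`-torsor with a lift `{λ_g}` of the `G`-action, and let
`N ⊴ G` be the subgroup of elements acting trivially on `A`.  Then there is an induced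
action of `G/N` on `y` (a lift `μ` constant on `N`-cosets) whose obstruction cochain factors
through `G/N`, and the obstruction class of the `G`-action is the inflation of the
obstruction class of the `G/N`-action: `χ_λ` is cohomologous to `(g,h) ↦ c(⟦g⟧,⟦h⟧)`. -/
theorem obstruction_class_is_inflated
    (J : GrothendieckTopology C) (A : Cᵒᵖ ⥤ AddCommGrpCat.{v})
    (hA : Presheaf.IsSheaf J (A ⋙ forget AddCommGrpCat))
    (G : Type w) [Group G] [Finite G] (act : SheafGrpAction G A)
    (y : SheafTorsor J A) (lam : G → (y.Y ⟶ y.Y)) (hlam : IsActionLift act y lam)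
    (χ : G → G → A.obj (op (⊤_ C))) (hχ : IsObstructionCochain y lam χ)
    (N : Subgroup G) (hN : ∀ g : G, g ∈ N ↔ act.ρ g = 𝟙 A) (hNnormal : N.Normal) :
    ∃ (μ : G ⧸ N → (y.Y ⟶ y.Y)) (c : G ⧸ N → G ⧸ N → A.obj (op (⊤_ C))),
      IsActionLift act y (fun g => μ (g : G ⧸ N)) ∧
      IsObstructionCochain y (fun g => μ (g : G ⧸ N))
        (fun g h => c (g : G ⧸ N) (h : G ⧸ N)) ∧
      ∃ a : G → A.obj (op (⊤_ C)), ∀ g h : G,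
        χ g h = c (g : G ⧸ N) (h : G ⧸ N) +
          ((act.ρ g).app (op (⊤_ C)) (a h) - a (g * h) + a g) := by
  classical
  -- elements in the same coset act the same way on `A`
  have hρeq : ∀ g g' : G, (g : G ⧸ N) = (g' : G ⧸ N) → act.ρ g = act.ρ g' := by
    intro g g' hgg'
    have hn : g⁻¹ * g' ∈ N := QuotientGroup.eq.mp hgg'
    have hg' : g' = g * (g⁻¹ * g') := by group
    rw [hg', act.ρ_mul, (hN _).1 hn, Category.id_comp]
  have hout : ∀ g : G, act.ρ ((g : G ⧸ N).out) = act.ρ g :=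
    fun g => hρeq _ _ (QuotientGroup.out_eq' (g : G ⧸ N))
  -- the candidate induced action
  set μ : G ⧸ N → (y.Y ⟶ y.Y) := fun q => lam q.out with hμ
  -- equivariance of compositions
  have hcomp : ∀ q r : G ⧸ N,
      IsEquivariantMap (act.ρ (q.out * r.out)) y y (lam r.out ≫ lam q.out) := by
    intro q r U a x
    simp only [NatTrans.comp_app, types_comp_apply]
    rw [hlam r.out U a x, hlam q.out U _ _, act.ρ_mul]
    rfl
  have hmulout : ∀ q r : G ⧸ N, act.ρ ((q * r).out) = act.ρ (q.out * r.out) := by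
    intro q r
    refine hρeq _ _ ?_
    rw [QuotientGroup.out_eq', QuotientGroup.mk_mul, QuotientGroup.out_eq',
      QuotientGroup.out_eq']
  -- the obstruction cochain of the induced action
  have hc : ∀ q r : G ⧸ N, ∃ cqr : A.obj (op (⊤_ C)), ∀ (U : Cᵒᵖ) (x : y.Y.obj U),
      (lam q.out).app U ((lam r.out).app U x) =
        y.smul U (A.map (terminal.from U.unop).op cqr) ((lam (q * r).out).app U x) := by
    intro q r
    obtain ⟨cqr, hcqr⟩ := exists_global_scalar y hA (act.ρ (q.out * r.out))
      (lam r.out ≫ lam q.out) (lam (q * r).out) (hcomp q r)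
      (by rw [← hmulout q r]; exact hlam _)
    refine ⟨cqr, fun U x => ?_⟩
    have := hcqr U x
    simpa only [NatTrans.comp_app, types_comp_apply] using this
  choose c Hc using hc
  -- the difference cochain between the two lifts
  have ha : ∀ g : G, ∃ ag : A.obj (op (⊤_ C)), ∀ (U : Cᵒᵖ) (x : y.Y.obj U),
      (lam g).app U x =
        y.smul U (A.map (terminal.from U.unop).op ag) ((lam (g : G ⧸ N).out).app U x) := by
    intro g
    exact exists_global_scalar y hA (act.ρ g) (lam g) (lam (g : G ⧸ N).out)
      (hlam g) (by rw [← hout g]; exact hlam _)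
  choose a Ha using ha
  refine ⟨μ, c, ?_, ?_, a, ?_⟩
  · -- the induced lift is an action lift
    intro g
    have := hlam (g : G ⧸ N).out
    rw [hout g] at this
    exact this
  · -- `c` is an obstruction cochain for the induced lift
    intro g h U x
    exact Hc g h U x
  · -- inflation identity
    intro g h
    obtain ⟨S, hS, hne⟩ := y.locally_nonempty (⊤_ C)
    have hsep := (((isSheaf_iff_isSheaf_of_type J _).1 hA) S hS).isSeparatedFor
    refine hsep.ext (fun W f hf => ?_)
    obtain rfl : f = terminal.from W := terminal.hom_ext f _
    obtain ⟨x⟩ := hne _ hf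
    set φ := (terminal.from W).op with hφ
    show A.map φ (χ g h) = A.map φ _
    set z := (lam ((g * h : G) : G ⧸ N).out).app (op W) x with hz
    -- first computation of `lam g (lam h x)`
    have E1 : (lam g).app (op W) ((lam h).app (op W) x) =
        y.smul (op W) (A.map φ (χ g h) + A.map φ (a (g * h))) z := by
      rw [hχ g h (op W) x, Ha (g * h) (op W) x, ← y.add_smul]
    -- second computation of `lam g (lam h x)`
    have E2 : (lam g).app (op W) ((lam h).app (op W) x) =
        y.smul (op W) ((act.ρ g).app (op W) (A.map φ (a h)) +
          A.map φ (a g) + A.map φ (c (g : G ⧸ N) (h : G ⧸ N))) z := by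
      rw [Ha h (op W) x, hlam g (op W) _ _, Ha g (op W) _,
        Hc (g : G ⧸ N) (h : G ⧸ N) (op W) x, ← QuotientGroup.mk_mul,
        ← y.add_smul, ← y.add_smul]
    have E : A.map φ (χ g h) + A.map φ (a (g * h)) =
        (act.ρ g).app (op W) (A.map φ (a h)) +
          A.map φ (a g) + A.map φ (c (g : G ⧸ N) (h : G ⧸ N)) :=
      y.smul_injective (op W) _ _ z (E1.symm.trans E2)
    have hnat : (act.ρ g).app (op W) (A.map φ (a h)) =
        A.map φ ((act.ρ g).app (op (⊤_ C)) (a h)) := by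
      exact congrArg (fun (m : A.obj (op (⊤_ C)) ⟶ A.obj (op W)) => m (a h))
        (NatTrans.naturality (act.ρ g) φ)
    rw [map_add, map_add, map_sub]
    have hχeq : A.map φ (χ g h) =
        (act.ρ g).app (op W) (A.map φ (a h)) +
          A.map φ (a g) + A.map φ (c (g : G ⧸ N) (h : G ⧸ N)) - A.map φ (a (g * h)) :=
      eq_sub_of_add_eq E
    rw [hχeq, hnat]
    abel
end

section
/- Let E be an abelian sheaf on X_τ, G a finite group, and M a left G̲-torsor. Then the group cohomology of G acting on E[M] locally vanishes in all positive degrees: for every object U of X_τ there exists a cover {U_i → U}_{i∈I} such that H^j(G, E[M](U_i)) = 0 for all i ∈ I and all j > 0. -/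
open CategoryTheory Limits Opposite

universe u

variable {C : Type u} [SmallCategory C]

/-- Data exhibiting a sheaf of groups `F` as the constant sheaf `G̲` with value the group
`G`: a sheaf of groups together with compatible homomorphisms `ι : G →* F(U)` which are
locally bijective (the sheafification of the constant presheaf with value `G`). -/
structure ConstantGroupSheaf (J : GrothendieckTopology C) (G : Type u) [Group G] where
  /-- the underlying presheaf of groups -/
  F : Cᵒᵖ ⥤ GrpCat.{u}
  isSheaf : Presheaf.IsSheaf J (F ⋙ forget GrpCat)
  /-- the canonical map from constants -/
  ι : ∀ U : Cᵒᵖ, G →* F.obj U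
  ι_natural : ∀ {U V : Cᵒᵖ} (f : U ⟶ V) (g : G), F.map f (ι U g) = ι V g
  locally_surjective : ∀ (U : C) (σ : F.obj (op U)), ∃ S ∈ J U,
    ∀ ⦃V : C⦄ (f : V ⟶ U), S.arrows f → ∃ g : G, ι (op V) g = F.map f.op σ
  locally_injective : ∀ (U : C) (g g' : G), ι (op U) g = ι (op U) g' →
    g = g' ∨ (⊥ : Sieve U) ∈ J U

variable {J : GrothendieckTopology C} {G : Type u} [Group G]

/-- A left `G̲`-torsor on the site `(C, J)`: a sheaf of sets with an action of the constant
sheaf of groups `G̲` which is simply transitive on sections wherever these are nonempty and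
admits sections locally. -/
structure ConstTorsor (D : ConstantGroupSheaf J G) where
  /-- the underlying sheaf of sets -/
  Y : Cᵒᵖ ⥤ Type u
  isSheaf : Presheaf.IsSheaf J Y
  /-- the action of `G̲` -/
  smul : ∀ U : Cᵒᵖ, D.F.obj U → Y.obj U → Y.obj U
  one_smul : ∀ (U : Cᵒᵖ) (x : Y.obj U), smul U 1 x = x
  mul_smul : ∀ (U : Cᵒᵖ) (σ τ : D.F.obj U) (x : Y.obj U),
    smul U (σ * τ) x = smul U σ (smul U τ x)
  map_smul : ∀ {U V : Cᵒᵖ} (f : U ⟶ V) (σ : D.F.obj U) (x : Y.obj U),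
    Y.map f (smul U σ x) = smul V (D.F.map f σ) (Y.map f x)
  exists_smul_eq : ∀ (U : Cᵒᵖ) (x₁ x₂ : Y.obj U), ∃ σ : D.F.obj U, smul U σ x₁ = x₂
  smul_injective : ∀ (U : Cᵒᵖ) (σ τ : D.F.obj U) (x : Y.obj U),
    smul U σ x = smul U τ x → σ = τ
  locally_nonempty : ∀ U : C, ∃ S ∈ J U,
    ∀ ⦃V : C⦄ (f : V ⟶ U), S.arrows f → Nonempty (Y.obj (op V))

variable {D : ConstantGroupSheaf J G}

/-- Sections over `U` of the internal hom sheaf `E[M] = Hom(M, E)`: compatible families of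
maps `M(V) → E(V)` indexed by `f : V ⟶ U`. -/
def EMsec (M : ConstTorsor D) (T : Cᵒᵖ ⥤ Type u) (U : C) : Type u :=
  { φ : ∀ ⦃V : C⦄, (V ⟶ U) → M.Y.obj (op V) → T.obj (op V) //
    ∀ ⦃V W : C⦄ (f : V ⟶ U) (e : W ⟶ V) (m : M.Y.obj (op V)),
      φ (e ≫ f) (M.Y.map e.op m) = T.map e.op (φ f m) }

/-- The internal hom sheaf `E[M] : U ↦ Mor(M|_U, E|_U)`. -/
def EM (M : ConstTorsor D) (T : Cᵒᵖ ⥤ Type u) : Cᵒᵖ ⥤ Type u where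
  obj U := EMsec M T U.unop
  map {U V} h := TypeCat.ofHom fun φ => ⟨fun W f m => φ.1 (f ≫ h.unop) m, by
    intro W W' f e m
    have := φ.2 (f ≫ h.unop) e m
    simpa [Category.assoc] using this⟩
  map_id U := by
    refine ConcreteCategory.hom_ext _ _ fun φ => ?_
    apply Subtype.ext
    funext W f m
    show φ.1 (f ≫ 𝟙 _) m = φ.1 f m
    simp
  map_comp {U V W} h h' := by
    refine ConcreteCategory.hom_ext _ _ fun φ => ?_
    apply Subtype.ext
    funext W' f m
    show φ.1 (f ≫ (h ≫ h').unop) m = φ.1 ((f ≫ h'.unop) ≫ h.unop) m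
    simp [Category.assoc]

/-- The left `G`-action on the internal hom sheaf `E[M]`, given by
`(g · φ)(m) = φ(g⁻¹ · m)`. -/
def emSmul (M : ConstTorsor D) (T : Cᵒᵖ ⥤ Type u) (g : G) : EM M T ⟶ EM M T where
  app U := TypeCat.ofHom fun φ => ⟨fun V f m => φ.1 f (M.smul (op V) (D.ι (op V) g⁻¹) m), by
    intro V W f e m
    rw [← φ.2 f e, M.map_smul e.op, D.ι_natural e.op]⟩
  naturality U V h := by
    refine ConcreteCategory.hom_ext _ _ fun φ => ?_
    apply Subtype.ext
    funext W f m
    rfl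
/-- The abelian group of sections over `U` of the internal hom sheaf `E[M]`, for an
abelian sheaf `E`: compatible families of maps `M(V) → E(V)`, with pointwise addition. -/
def emAddSubgroup (M : ConstTorsor D) (E : Cᵒᵖ ⥤ AddCommGrpCat.{u}) (U : C) :
    AddSubgroup (∀ (V : C), (V ⟶ U) → M.Y.obj (op V) → E.obj (op V)) where
  carrier := {φ | ∀ (V W : C) (f : V ⟶ U) (e : W ⟶ V) (m : M.Y.obj (op V)),
    φ W (e ≫ f) (M.Y.map e.op m) = E.map e.op (φ V f m)}
  add_mem' := by
    intro a b ha hb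
    intro V W f e m
    simp only [Pi.add_apply]
    rw [ha V W f e m, hb V W f e m, map_add]
  zero_mem' := by
    intro V W f e m
    simp
  neg_mem' := by
    intro a ha V W f e m
    simp only [Pi.neg_apply]
    rw [ha V W f e m, map_neg]

/-- The `G`-action on the sections of `E[M]`, as an additive group homomorphism. -/
def emRepAux (M : ConstTorsor D) (E : Cᵒᵖ ⥤ AddCommGrpCat.{u}) (U : C) (g : G) :
    emAddSubgroup M E U →+ emAddSubgroup M E U where
  toFun φ := ⟨fun V f m => φ.1 V f (M.smul (op V) (D.ι (op V) g⁻¹) m), by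
    intro V W f e m
    rw [← φ.2 V W f e, M.map_smul e.op, D.ι_natural e.op]⟩
  map_zero' := by apply Subtype.ext; funext V f m; rfl
  map_add' φ ψ := by apply Subtype.ext; funext V f m; rfl

/-- The representation of `G` on the sections of `E[M]` over `U`. -/
def emRep (M : ConstTorsor D) (E : Cᵒᵖ ⥤ AddCommGrpCat.{u}) (U : C) :
    Representation ℤ G (emAddSubgroup M E U) where
  toFun g := (emRepAux M E U g).toIntLinearMap
  map_one' := by
    refine LinearMap.ext fun φ => ?_
    rw [Module.End.one_apply]
    apply Subtype.ext
    funext V f m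
    show φ.1 V f (M.smul (op V) (D.ι (op V) (1 : G)⁻¹) m) = φ.1 V f m
    rw [inv_one, map_one, M.one_smul]
  map_mul' g h := by
    refine LinearMap.ext fun φ => ?_
    rw [Module.End.mul_apply]
    apply Subtype.ext
    funext V f m
    show φ.1 V f (M.smul (op V) (D.ι (op V) (g * h)⁻¹) m)
      = φ.1 V f (M.smul (op V) (D.ι (op V) h⁻¹) (M.smul (op V) (D.ι (op V) g⁻¹) m))
    rw [mul_inv_rev, map_mul, M.mul_smul]


namespace EMAux
open groupCohomology


variable {G : Type} [Group G]

lemma contractNth_cons_zero {n : ℕ} (x : G) (g : Fin (n+1) → G) :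
    Fin.contractNth 0 (· * ·) (Fin.cons x g) = Fin.cons (x * g 0) (fun i => g i.succ) := by
  funext k
  rcases Fin.eq_zero_or_eq_succ k with hk | ⟨m, hm⟩
  · subst hk
    rw [Fin.contractNth_apply_of_eq _ _ _ _ rfl]
    simp
  · subst hm
    rw [Fin.contractNth_apply_of_gt _ _ _ _ (by simp)]
    simp

lemma contractNth_cons_succ {n : ℕ} (x : G) (i : Fin (n+1)) (g : Fin (n+1) → G) :
    Fin.contractNth i.succ (· * ·) (Fin.cons x g) = Fin.cons x (Fin.contractNth i (· * ·) g) := by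
  funext k
  rcases Fin.eq_zero_or_eq_succ k with hk | ⟨m, hm⟩
  · subst hk
    rw [Fin.contractNth_apply_of_lt _ _ _ _ (by simp)]
    simp
  · subst hm
    rcases lt_trichotomy (m : ℕ) (i : ℕ) with h | h | h
    · rw [Fin.contractNth_apply_of_lt _ _ _ _ (by simpa using h),
        Fin.castSucc_fin_succ, Fin.cons_succ, Fin.cons_succ,
        Fin.contractNth_apply_of_lt _ _ _ _ h]
    · rw [Fin.contractNth_apply_of_eq _ _ _ _ (by simpa using h),
        Fin.castSucc_fin_succ, Fin.cons_succ, Fin.cons_succ, Fin.cons_succ,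
        Fin.contractNth_apply_of_eq _ _ _ _ h]
    · rw [Fin.contractNth_apply_of_gt _ _ _ _ (by simpa using h),
        Fin.cons_succ, Fin.cons_succ,
        Fin.contractNth_apply_of_gt _ _ _ _ h]

lemma zsmul_eq (M : Type) [AddCommGroup M] (inst : Module ℤ M) (c : ℤ) (a : M) :
    @HSMul.hSMul ℤ M M (@instHSMul ℤ M (@SMulZeroClass.toSMul ℤ M _
      (@SMulWithZero.toSMulZeroClass ℤ M _ _ (@MulActionWithZero.toSMulWithZero ℤ M _ _
        (@Module.toMulActionWithZero ℤ M _ _ inst))))) c a = c • a := by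
  have h := @Int.cast_smul_eq_zsmul ℤ M _ _ inst c a
  simpa using h

lemma acyclic (A : Rep ℤ G) (B : Type) [AddCommGroup B] (π : A →+ B)
    (hinj : ∀ a : A, (∀ x : G, π (A.ρ x a) = 0) → a = 0)
    (hsurj : ∀ ψ : G → B, ∃ a : A, ∀ x : G, π (A.ρ x a) = ψ x) :
    ∀ j : ℕ, 0 < j → IsZero (groupCohomology A j) := by
  have hπs : ∀ (c : ℤ) (a : A), π (c • a) = c • π a := fun c a => by
    simpa using map_intCast_smul π ℤ ℤ c a
  intro j hj
  obtain ⟨n, rfl⟩ : ∃ n, j = n + 1 := ⟨j - 1, (Nat.succ_pred_eq_of_pos hj).symm⟩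
  rw [groupCohomology, ← HomologicalComplex.exactAt_iff_isZero_homology,
    HomologicalComplex.exactAt_iff' _ n (n+1) (n+2) (by simp) (by simp),
    ShortComplex.moduleCat_exact_iff]
  intro φ hφ
  have hφ' : (inhomogeneousCochains.d A (n+1)).hom φ = 0 := by
    have : (inhomogeneousCochains A).d (n+1) (n+2) φ = 0 := hφ
    rwa [inhomogeneousCochains.d_def] at this
  choose ψ hψ using fun h : Fin n → G => hsurj (fun x => π (φ (Fin.cons x h)))
  refine ⟨ψ, ?_⟩
  show (inhomogeneousCochains A).d n (n+1) ψ = φ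
  rw [inhomogeneousCochains.d_def]
  funext g
  refine sub_eq_zero.1 (hinj _ fun x => ?_)
  rw [map_sub, map_sub, sub_eq_zero]
  have h1 : A.ρ x (φ g) = φ (Fin.cons (x * g 0) (fun i => g i.succ)) +
      ∑ i : Fin (n+1), (-1 : ℤ) ^ ((i : ℕ) + 1) •
        φ (Fin.cons x (Fin.contractNth i (· * ·) g)) := by
    have h0 := congrFun hφ' (Fin.cons x g)
    erw [inhomogeneousCochains.d_hom_apply] at h0
    simp only [zsmul_eq _ (A.hV2)] at h0
    erw [Pi.zero_apply] at h0
    have hcz : (Fin.cons x g : Fin (n+2) → G) 0 = x := rfl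
    have hcs : (fun i : Fin (n+1) => (Fin.cons x g : Fin (n+2) → G) i.succ) = g := by
      funext i; simp
    rw [hcz, hcs, Fin.sum_univ_succ, contractNth_cons_zero] at h0
    simp only [contractNth_cons_succ] at h0
    rw [eq_neg_of_add_eq_zero_left h0, neg_add]
    congr 1
    · simp
    · rw [← Finset.sum_neg_distrib]
      refine Finset.sum_congr rfl fun i _ => ?_
      show -((-1 : ℤ) ^ ((i : ℕ) + 1 + 1) • φ (Fin.cons x (Fin.contractNth i (· * ·) g)))
        = (-1 : ℤ) ^ ((i : ℕ) + 1) • φ (Fin.cons x (Fin.contractNth i (· * ·) g))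
      rw [pow_succ, mul_neg_one, neg_smul, neg_neg]
  have key2 : π (A.ρ x (φ g)) =
      π (φ (Fin.cons (x * g 0) (fun i => g i.succ))) +
        ∑ i : Fin (n+1), (-1 : ℤ) ^ ((i : ℕ) + 1) •
          π (φ (Fin.cons x (Fin.contractNth i (· * ·) g))) := by
    rw [h1, map_add, map_sum]
    congr 1
    exact Finset.sum_congr rfl fun i _ => hπs _ _
  have key1 : π (A.ρ x ((inhomogeneousCochains.d A n).hom ψ g)) =
      π (φ (Fin.cons (x * g 0) (fun i => g i.succ))) +
        ∑ i : Fin (n+1), (-1 : ℤ) ^ ((i : ℕ) + 1) •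
          π (φ (Fin.cons x (Fin.contractNth i (· * ·) g))) := by
    rw [inhomogeneousCochains.d_hom_apply]
    simp only [zsmul_eq _ (A.hV2)]
    rw [map_add, map_add, map_sum, map_sum]
    congr 1
    · have hmul : A.ρ x (A.ρ (g 0) (ψ fun i => g i.succ))
          = A.ρ (x * g 0) (ψ fun i => g i.succ) := by
        rw [map_mul]; rfl
      rw [hmul, hψ]
    · refine Finset.sum_congr rfl fun i _ => ?_
      have h2 : π (A.ρ x ((-1 : ℤ) ^ ((i : ℕ) + 1) • ψ (Fin.contractNth i (· * ·) g)))
          = (-1 : ℤ) ^ ((i : ℕ) + 1) • π (A.ρ x (ψ (Fin.contractNth i (· * ·) g))) := by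
        simpa using map_intCast_smul (π.comp (A.ρ x).toAddMonoidHom) ℤ ℤ
          ((-1 : ℤ) ^ ((i : ℕ) + 1)) (ψ (Fin.contractNth i (· * ·) g))
      rw [hψ] at h2
      exact h2
  show π (A.ρ x ((inhomogeneousCochains.d A n).hom ψ g)) = π (A.ρ x (φ g))
  rw [key1, key2]


section PartB

variable {C : Type} [SmallCategory C] {J : GrothendieckTopology C}
variable {G : Type} [Group G] {D : ConstantGroupSheaf J G}
variable (M : ConstTorsor D) (E : Cᵒᵖ ⥤ AddCommGrpCat)

/-- The sieve of arrows on which `m` becomes `ι g • m₀` for some `g : G`. -/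
def trivSieve {V W : C} (m₀ : M.Y.obj (op V)) (f : W ⟶ V) (m : M.Y.obj (op W)) : Sieve W where
  arrows W' e := ∃ g : G, M.Y.map e.op m
    = M.smul (op W') (D.ι (op W') g) (M.Y.map (e ≫ f).op m₀)
  downward_closed := by
    rintro W' W'' e ⟨g, hg⟩ e'
    refine ⟨g, ?_⟩
    have h1 : M.Y.map (e' ≫ e).op m = M.Y.map e'.op (M.Y.map e.op m) := by
      rw [op_comp, M.Y.map_comp]; rfl
    rw [h1, hg, M.map_smul, D.ι_natural]
    congr 1
    rw [← FunctorToTypes.map_comp_apply, ← op_comp, Category.assoc]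

lemma trivSieve_mem {V W : C} (m₀ : M.Y.obj (op V)) (f : W ⟶ V) (m : M.Y.obj (op W)) :
    trivSieve M m₀ f m ∈ J W := by
  obtain ⟨σ, hσ⟩ := M.exists_smul_eq (op W) (M.Y.map f.op m₀) m
  obtain ⟨S', hS', hloc⟩ := D.locally_surjective W σ
  refine J.superset_covering ?_ hS'
  rintro W' e he
  obtain ⟨g, hg⟩ := hloc e he
  refine ⟨g, ?_⟩
  rw [← hσ, M.map_smul, hg]
  congr 1
  rw [← FunctorToTypes.map_comp_apply, ← op_comp]

lemma subsing (hE' : Presieve.IsSheaf J (E ⋙ forget AddCommGrpCat)) {W : C} (hW : (⊥ : Sieve W) ∈ J W) (a b : E.obj (op W)) : a = b := by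
  refine ((hE' _ hW).isSeparatedFor).ext ?_
  intro Y f hf
  exact False.elim (by simpa using hf)

lemma comp_eq (hE' : Presieve.IsSheaf J (E ⋙ forget AddCommGrpCat)) {V W : C} (h : W ⟶ V) {g g' : G} (hgg : D.ι (op W) g = D.ι (op W) g')
    (ψ : G → E.obj (op V)) : E.map h.op (ψ g) = E.map h.op (ψ g') := by
  rcases D.locally_injective W g g' hgg with rfl | hbotW
  · rfl
  · exact subsing E hE' hbotW _ _

/-- The family of elements to glue: on each arrow where `m = ι g • m₀`, take `ψ g`. -/
noncomputable def fam {V : C} (m₀ : M.Y.obj (op V)) (ψ : G → E.obj (op V)) {W : C} (f : W ⟶ V)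
    (m : M.Y.obj (op W)) :
    Presieve.FamilyOfElements (E ⋙ forget AddCommGrpCat) (trivSieve M m₀ f m).arrows :=
  fun _ e he => E.map (e ≫ f).op (ψ (Classical.choose he))

lemma fam_compatible (hE' : Presieve.IsSheaf J (E ⋙ forget AddCommGrpCat)) {V : C} (m₀ : M.Y.obj (op V)) (ψ : G → E.obj (op V)) {W : C}
    (f : W ⟶ V) (m : M.Y.obj (op W)) : (fam M E m₀ ψ f m).Compatible := by
  rw [Presieve.compatible_iff_sieveCompatible]
  intro W' W'' e e' he
  have spec1 := Classical.choose_spec (Sieve.downward_closed (trivSieve M m₀ f m) he e')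
  have spec2 := Classical.choose_spec he
  have h1 : M.Y.map (e' ≫ e).op m = M.Y.map e'.op (M.Y.map e.op m) := by
    rw [op_comp, M.Y.map_comp]; rfl
  have spec2' : M.Y.map (e' ≫ e).op m
      = M.smul (op W'') (D.ι (op W'') (Classical.choose he))
        (M.Y.map ((e' ≫ e) ≫ f).op m₀) :=
    (h1.trans (congrArg (M.Y.map e'.op) spec2)).trans (by
      rw [M.map_smul, D.ι_natural]
      congr 1
      rw [← FunctorToTypes.map_comp_apply, ← op_comp, Category.assoc])
  have hι := M.smul_injective (op W'') _ _ _ (spec1.symm.trans spec2')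
  show E.map ((e' ≫ e) ≫ f).op (ψ _) = E.map e'.op (E.map (e ≫ f).op (ψ _))
  have hcomp2 : E.map e'.op (E.map (e ≫ f).op (ψ (Classical.choose he)))
      = E.map ((e' ≫ e) ≫ f).op (ψ (Classical.choose he)) := by
    rw [← comp_apply, ← E.map_comp, ← op_comp, Category.assoc]
  rw [hcomp2]
  exact comp_eq E hE' _ hι ψ

/-- The glued section of `E` over `W` attached to `(f, m)` and `ψ : G → E(V)`. -/
noncomputable def glue (hE' : Presieve.IsSheaf J (E ⋙ forget AddCommGrpCat)) {V : C} (m₀ : M.Y.obj (op V)) (ψ : G → E.obj (op V)) {W : C}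
    (f : W ⟶ V) (m : M.Y.obj (op W)) : E.obj (op W) :=
  (hE' _ (trivSieve_mem M m₀ f m)).amalgamate (fam M E m₀ ψ f m)
    (fam_compatible M E hE' m₀ ψ f m)

lemma glue_spec (hE' : Presieve.IsSheaf J (E ⋙ forget AddCommGrpCat)) {V : C} (m₀ : M.Y.obj (op V)) (ψ : G → E.obj (op V)) {W : C}
    (f : W ⟶ V) (m : M.Y.obj (op W)) {W' : C} (e : W' ⟶ W) (g : G)
    (hw : M.Y.map e.op m = M.smul (op W') (D.ι (op W') g) (M.Y.map (e ≫ f).op m₀)) :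
    E.map e.op (glue M E hE' m₀ ψ f m) = E.map (e ≫ f).op (ψ g) := by
  have hval := (hE' _ (trivSieve_mem M m₀ f m)).valid_glue
    (fam_compatible M E hE' m₀ ψ f m) e ⟨g, hw⟩
  have hι := M.smul_injective (op W') _ _ _
    ((Classical.choose_spec (⟨g, hw⟩ : ∃ g : G, M.Y.map e.op m
      = M.smul (op W') (D.ι (op W') g) (M.Y.map (e ≫ f).op m₀))).symm.trans hw)
  exact hval.trans (comp_eq E hE' _ hι ψ)

/-- The glued element of `E[M](V)`. -/
noncomputable def glueSec (hE' : Presieve.IsSheaf J (E ⋙ forget AddCommGrpCat)) {V : C} (m₀ : M.Y.obj (op V)) (ψ : G → E.obj (op V)) :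
    emAddSubgroup M E V where
  val := fun _ f m => glue M E hE' m₀ ψ f m
  property := by
    intro W W' f e m
    refine ((hE' _ (trivSieve_mem M m₀ (e ≫ f) (M.Y.map e.op m))).isSeparatedFor).ext ?_
    intro W'' e' he'
    obtain ⟨g, hg⟩ := he'
    have hw2 : M.Y.map (e' ≫ e).op m
        = M.smul (op W'') (D.ι (op W'') g) (M.Y.map ((e' ≫ e) ≫ f).op m₀) := by
      have h1 : M.Y.map (e' ≫ e).op m = M.Y.map e'.op (M.Y.map e.op m) := by
        rw [op_comp, M.Y.map_comp]; rfl
      rw [h1, hg, Category.assoc]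
    show E.map e'.op (glue M E hE' m₀ ψ (e ≫ f) (M.Y.map e.op m))
      = E.map e'.op (E.map e.op (glue M E hE' m₀ ψ f m))
    rw [glue_spec M E hE' m₀ ψ (e ≫ f) (M.Y.map e.op m) e' g hg]
    have hcomp2 : E.map e'.op (E.map e.op (glue M E hE' m₀ ψ f m))
        = E.map (e' ≫ e).op (glue M E hE' m₀ ψ f m) := by
      rw [← comp_apply, ← E.map_comp, ← op_comp]
    rw [hcomp2, glue_spec M E hE' m₀ ψ f m (e' ≫ e) g hw2, Category.assoc]

lemma glue_id (hE' : Presieve.IsSheaf J (E ⋙ forget AddCommGrpCat)) {V : C} (m₀ : M.Y.obj (op V)) (ψ : G → E.obj (op V)) (g : G) :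
    glue M E hE' m₀ ψ (𝟙 V) (M.smul (op V) (D.ι (op V) g) m₀) = ψ g := by
  refine ((hE' _ (trivSieve_mem M m₀ (𝟙 V)
    (M.smul (op V) (D.ι (op V) g) m₀))).isSeparatedFor).ext ?_
  intro W' e' he'
  have hw : M.Y.map e'.op (M.smul (op V) (D.ι (op V) g) m₀)
      = M.smul (op W') (D.ι (op W') g) (M.Y.map (e' ≫ 𝟙 V).op m₀) := by
    rw [M.map_smul, D.ι_natural, Category.comp_id]
  show E.map e'.op (glue M E hE' m₀ ψ (𝟙 V) (M.smul (op V) (D.ι (op V) g) m₀))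
    = E.map e'.op (ψ g)
  rw [glue_spec M E hE' m₀ ψ (𝟙 V) _ e' g hw, Category.comp_id]

/-- Restriction identity for sections of `E[M]`. -/
lemma phi_triv {V : C} (m₀ : M.Y.obj (op V)) (φ : emAddSubgroup M E V) {W : C}
    (h : W ⟶ V) (g : G) :
    φ.1 W h (M.smul (op W) (D.ι (op W) g) (M.Y.map h.op m₀))
      = E.map h.op (φ.1 V (𝟙 V) (M.smul (op V) (D.ι (op V) g) m₀)) := by
  have h2 := φ.2 V W (𝟙 V) h (M.smul (op V) (D.ι (op V) g) m₀)
  rw [Category.comp_id, M.map_smul, D.ι_natural] at h2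
  exact h2

lemma em_acyclic (hE : Presheaf.IsSheaf J (E ⋙ forget AddCommGrpCat)) (V : C)
    (m₀ : M.Y.obj (op V)) :
    ∀ j : ℕ, 0 < j → IsZero (groupCohomology (Rep.of (emRep M E V)) j) := by
  have hE' : Presieve.IsSheaf J (E ⋙ forget AddCommGrpCat) :=
    (isSheaf_iff_isSheaf_of_type J _).1 hE
  refine acyclic (Rep.of (emRep M E V)) (E.obj (op V))
    { toFun := fun φ => (φ : emAddSubgroup M E V).1 V (𝟙 V) m₀
      map_zero' := rfl
      map_add' := fun _ _ => rfl } ?_ ?_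
  · -- injectivity
    intro φ hφ0
    refine Subtype.ext (funext fun W => funext fun f => funext fun m => ?_)
    have hmem := trivSieve_mem (J := J) M m₀ f m
    refine ((hE' _ hmem).isSeparatedFor).ext ?_
    intro W' e he
    obtain ⟨g, hg⟩ := he
    show E.map e.op ((φ : emAddSubgroup M E V).1 W f m) = E.map e.op (0 : E.obj (op W))
    have h1 := (φ : emAddSubgroup M E V).2 W W' f e m
    rw [← h1, hg, phi_triv M E m₀ _ (e ≫ f) g]
    have h0 : (φ : emAddSubgroup M E V).1 V (𝟙 V) (M.smul (op V) (D.ι (op V) g) m₀) = 0 := by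
      have h0' : (φ : emAddSubgroup M E V).1 V (𝟙 V)
          (M.smul (op V) (D.ι (op V) (g⁻¹)⁻¹) m₀) = 0 := hφ0 g⁻¹
      rwa [inv_inv] at h0' 
    rw [h0, map_zero, map_zero]
  · -- surjectivity
    intro ψ
    refine ⟨(glueSec M E hE' m₀ (fun g => ψ g⁻¹) : emAddSubgroup M E V), fun x => ?_⟩
    show glue M E hE' m₀ (fun g => ψ g⁻¹) (𝟙 V) (M.smul (op V) (D.ι (op V) x⁻¹) m₀) = ψ x
    rw [glue_id M E hE' m₀ (fun g => ψ g⁻¹) x⁻¹, inv_inv]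

end PartB
end EMAux

/-- For an abelian sheaf `E` and a left `G̲`-torsor `M`, the group
cohomology of `G` acting on `E[M]` locally vanishes in all positive degrees: every object
`U` admits a cover on whose members `H^j(G, E[M](U_i)) = 0` for all `j > 0`. -/
theorem em_group_cohomology_locally_vanishes
    (C : Type) [SmallCategory C] (J : GrothendieckTopology C)
    (G : Type) [Group G] [Finite G]
    (D : ConstantGroupSheaf J G) (M : ConstTorsor D)
    (E : Cᵒᵖ ⥤ AddCommGrpCat) (hE : Presheaf.IsSheaf J (E ⋙ forget AddCommGrpCat)) :
    ∀ U : C, ∃ S ∈ J U, ∀ ⦃V : C⦄ (f : V ⟶ U), S.arrows f →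
      ∀ j : ℕ, 0 < j →
        Limits.IsZero (groupCohomology (Rep.of (emRep M E V)) j) := by
  intro U
  obtain ⟨S, hS, hne⟩ := M.locally_nonempty U
  refine ⟨S, hS, ?_⟩
  intro V f hf j hj
  obtain ⟨m₀⟩ := hne f hf
  exact EMAux.em_acyclic M E hE V m₀ j hj
end
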